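/- arXiv:2009.07302 — 10 statements merged into one kernel-verified Lean document; each statement's English description precedes it below -/
import Mathlib

section
/- Let (T, η, μ) be a monad on the category of sets such that η is a cartesian natural transformation or μ is a cartesian natural transformation. Then the following are equivalent: (1) for every set X and all x ∈ X, τ ∈ TTX, if μ_X(τ) = η_X(x) then τ = η_{TX}(η_X(x)); (2) the same condition holds for the one-element set X = 1. In other words, the square with top id_X : X → X, left η∘η : X → TTX, right η : X → TX and bottom μ : TTX → TX is a pullback for all sets X if and only if it is a pullback for X = 1. -/
/-!
Map `X` to the point by `! : X → 1`. If `μ τ = η x`, naturality of `μ` and `η` gives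
`μ (TT! τ) = η *`, so strict positivity at `1` forces `TT! τ = η η *`. If `η` is cartesian, its
naturality square at `T!` then writes `τ = η w`, and `w = μ τ = η x`. If `μ` is cartesian, both `τ`
and `η η x` lie over `(η x, η η *)` in its naturality square at `!`, so they coincide.
-/

open CategoryTheory

universe u

namespace CategoryTheory.Monad

variable (T : Monad (Type u))

def StrictlyPositiveAt (X : Type u) : Prop :=
  ∀ (x : X) (τ : T.obj (T.obj X)),
    T.μ.app X τ = T.η.app X x → τ = T.η.app (T.obj X) (T.η.app X x)

def UnitIsCartesian : Prop :=
  ∀ (X Y : Type u) (f : X → Y) (y : Y) (t : T.obj X),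
    T.η.app Y y = T.map (TypeCat.ofHom f) t → ∃! x : X, f x = y ∧ T.η.app X x = t

def MultIsCartesian : Prop :=
  ∀ (X Y : Type u) (f : X → Y) (u : T.obj X) (v : T.obj (T.obj Y)),
    T.map (TypeCat.ofHom f) u = T.μ.app Y v →
      ∃! w : T.obj (T.obj X), T.μ.app X w = u ∧ T.map (T.map (TypeCat.ofHom f)) w = v

variable {T}

lemma map_eta_app_apply {X Y : Type u} (f : X ⟶ Y) (x : X) :
    T.map f (T.η.app X x) = T.η.app Y (f x) :=
  (ConcreteCategory.congr_hom (T.η.naturality f) x).symm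

lemma map_mu_app_apply {X Y : Type u} (f : X ⟶ Y) (τ : T.obj (T.obj X)) :
    T.map f (T.μ.app X τ) = T.μ.app Y (T.map (T.map f) τ) :=
  (ConcreteCategory.congr_hom (T.μ.naturality f) τ).symm

lemma mu_app_eta_app_apply {X : Type u} (t : T.obj X) :
    T.μ.app X (T.η.app (T.obj X) t) = t :=
  ConcreteCategory.congr_hom (T.left_unit X) t

lemma map_map_toUnit_eq_of_mu_eq_eta (h₁ : T.StrictlyPositiveAt PUnit.{u + 1}) {X : Type u}
    {x : X} {τ : T.obj (T.obj X)} (hτ : T.μ.app X τ = T.η.app X x) :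
    T.map (T.map (TypeCat.ofHom fun _ => PUnit.unit)) τ =
      T.η.app (T.obj PUnit) (T.η.app PUnit PUnit.unit) :=
  h₁ _ _ <| by rw [← map_mu_app_apply, hτ, map_eta_app_apply]

lemma strictlyPositiveAt_of_unitIsCartesian (hη : T.UnitIsCartesian)
    (h₁ : T.StrictlyPositiveAt PUnit.{u + 1}) (X : Type u) : T.StrictlyPositiveAt X := by
  intro x τ hτ
  obtain ⟨w, ⟨-, rfl⟩, -⟩ := hη _ _ _ _ τ (map_map_toUnit_eq_of_mu_eq_eta h₁ hτ).symm
  rw [mu_app_eta_app_apply] at hτ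
  rw [hτ]

lemma strictlyPositiveAt_of_multIsCartesian (hμ : T.MultIsCartesian)
    (h₁ : T.StrictlyPositiveAt PUnit.{u + 1}) (X : Type u) : T.StrictlyPositiveAt X := by
  intro x τ hτ
  have hτ₁ := map_map_toUnit_eq_of_mu_eq_eta h₁ hτ
  obtain ⟨w, -, huniq⟩ := hμ X PUnit (fun _ => PUnit.unit) (T.η.app X x)
    (T.map (T.map (TypeCat.ofHom fun _ => PUnit.unit)) τ) <| by
    rw [hτ₁, mu_app_eta_app_apply, map_eta_app_apply]
  have hηη : T.map (T.map (TypeCat.ofHom fun _ => PUnit.unit)) (T.η.app (T.obj X) (T.η.app X x)) =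
      T.η.app (T.obj PUnit) (T.η.app PUnit PUnit.unit) := by
    rw [map_eta_app_apply, map_eta_app_apply]
  rw [huniq τ ⟨hτ, rfl⟩, huniq _ ⟨mu_app_eta_app_apply _, hηη.trans hτ₁.symm⟩]

end CategoryTheory.Monad

/-- For a monad on `Set` whose unit or multiplication is a cartesian natural
transformation, the strict positivity square is a pullback for all sets `X`
if and only if it is a pullback for the one-element set. -/
theorem strictly_positive_iff_on_terminal
    (T : CategoryTheory.Monad (Type u))
    (hcart :
      (∀ (X Y : Type u) (f : X → Y) (y : Y) (t : T.obj X),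
        T.η.app Y y = T.map (TypeCat.ofHom f) t → ∃! x : X, f x = y ∧ T.η.app X x = t) ∨
      (∀ (X Y : Type u) (f : X → Y) (u : T.obj X) (v : T.obj (T.obj Y)),
        T.map (TypeCat.ofHom f) u = T.μ.app Y v →
          ∃! w : T.obj (T.obj X), T.μ.app X w = u ∧ T.map (T.map (TypeCat.ofHom f)) w = v)) :
    (∀ (X : Type u) (x : X) (τ : T.obj (T.obj X)),
        T.μ.app X τ = T.η.app X x → τ = T.η.app (T.obj X) (T.η.app X x))
    ↔
    (∀ (x : PUnit.{u + 1}) (τ : T.obj (T.obj PUnit.{u + 1})),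
        T.μ.app PUnit τ = T.η.app PUnit x →
          τ = T.η.app (T.obj PUnit) (T.η.app PUnit x)) := by
  refine ⟨fun h => h PUnit, fun h₁ X => ?_⟩
  rcases hcart with hη | hμ
  · exact Monad.strictlyPositiveAt_of_unitIsCartesian hη h₁ X
  · exact Monad.strictlyPositiveAt_of_multIsCartesian hμ h₁ X
end

section
/- Let (T, η, μ) be a monad on the category of sets and (A, e : TA → A) a T-algebra. The partial evaluation relation on TA, i.e. the set {(μ_A(τ), (Te)(τ)) : τ ∈ TTA} ⊆ TA × TA, is an internal relation on the free algebra (TA, μ_A), and moreover it is the smallest internal relation on TA containing the set {(t, η_A(e(t))) : t ∈ TA} which relates every formal expression to its total evaluation. -/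
/-!
The partial evaluation relation is the image of the pair of algebra morphisms
`μ_A, Te : (TTA, μ_TA) ⟶ (TA, μ_A)`, and the image of algebra morphisms is a subalgebra.
Conversely, an internal relation `R` containing every `(t, η (e t))` is closed under applying
`T` to `t ↦ (t, η (e t))` and flattening, which sends `τ : TTA` to
`(μ τ, μ (T (η ∘ e) τ)) = (μ τ, Te τ)`.
-/

open CategoryTheory

universe u

namespace CategoryTheory.Monad

def μHom {C : Type*} [Category C] (T : Monad C) (X : C) :
    T.free.obj (T.obj X) ⟶ T.free.obj X where
  f := T.μ.app X
  h := T.assoc X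

variable {T : Monad (Type u)}

/-- `R` is a subalgebra of `B × B`, whose structure map is `B.a` applied componentwise. -/
def IsInternalRel (B : T.Algebra) (R : Set (B.A × B.A)) : Prop :=
  ∀ ρ : T.obj R,
    (B.a (T.map (TypeCat.ofHom _root_.Prod.fst) (T.map (TypeCat.ofHom Subtype.val) ρ)),
     B.a (T.map (TypeCat.ofHom _root_.Prod.snd) (T.map (TypeCat.ofHom Subtype.val) ρ))) ∈ R

theorem map_ofHom_map_ofHom {X Y Z : Type u} (f : X → Y) (g : Y → Z) (x : T.obj X) :
    T.map (TypeCat.ofHom g) (T.map (TypeCat.ofHom f) x) = T.map (TypeCat.ofHom (g ∘ f)) x :=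
  (T.map_comp_apply (TypeCat.ofHom f) (TypeCat.ofHom g) x).symm

theorem Algebra.Hom.f_a_map_ofHom {B C : T.Algebra} (f : B ⟶ C) {X : Type u} (s : X → B.A)
    (x : T.obj X) :
    f.f (B.a (T.map (TypeCat.ofHom s) x)) = C.a (T.map (TypeCat.ofHom (f.f ∘ s)) x) := by
  rw [← map_ofHom_map_ofHom s f.f]
  exact (ConcreteCategory.congr_hom f.h _).symm

theorem IsInternalRel.map_mem {B : T.Algebra} {R : Set (B.A × B.A)} (hR : IsInternalRel B R)
    {X : Type u} {f g : X → B.A} (hfg : ∀ x, (f x, g x) ∈ R) (τ : T.obj X) :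
    (B.a (T.map (TypeCat.ofHom f) τ), B.a (T.map (TypeCat.ofHom g) τ)) ∈ R := by
  simpa only [map_ofHom_map_ofHom] using
    hR (T.map (TypeCat.ofHom fun x => (⟨(f x, g x), hfg x⟩ : R)) τ)

theorem isInternalRel_range_hom {B C : T.Algebra} (f g : B ⟶ C) :
    IsInternalRel C (Set.range fun b => (f.f b, g.f b)) := by
  intro ρ
  choose s hs using fun x : Set.range (fun b => (f.f b, g.f b)) => x.2
  refine ⟨B.a (T.map (TypeCat.ofHom s) ρ), ?_⟩
  have hfs : f.f ∘ s = _root_.Prod.fst ∘ Subtype.val :=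
    funext fun x => congrArg _root_.Prod.fst (hs x)
  have hgs : g.f ∘ s = _root_.Prod.snd ∘ Subtype.val :=
    funext fun x => congrArg _root_.Prod.snd (hs x)
  rw [map_ofHom_map_ofHom, map_ofHom_map_ofHom, ← hfs, ← hgs]
  exact Prod.ext (f.f_a_map_ofHom s ρ) (g.f_a_map_ofHom s ρ)

def partialEvaluation (A : T.Algebra) : Set (T.obj A.A × T.obj A.A) :=
  Set.range fun τ : T.obj (T.obj A.A) => (T.μ.app A.A τ, T.map A.a τ)

theorem isInternalRel_partialEvaluation (A : T.Algebra) :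
    IsInternalRel (T.free.obj A.A) (partialEvaluation A) :=
  isInternalRel_range_hom (T.μHom A.A) (T.free.map A.a)

theorem mk_η_mem_partialEvaluation (A : T.Algebra) (t : T.obj A.A) :
    (t, T.η.app A.A (A.a t)) ∈ partialEvaluation A :=
  ⟨T.η.app (T.obj A.A) t, Prod.ext (ConcreteCategory.congr_hom (T.left_unit A.A) t)
    (T.η.naturality_apply A.a t).symm⟩

theorem partialEvaluation_subset {A : T.Algebra} {R : Set (T.obj A.A × T.obj A.A)}
    (hR : IsInternalRel (T.free.obj A.A) R) (hη : ∀ t, (t, T.η.app A.A (A.a t)) ∈ R) :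
    partialEvaluation A ⊆ R := by
  rintro - ⟨τ, rfl⟩
  have h := hR.map_mem (f := fun t => t) (g := T.η.app A.A ∘ A.a) hη τ
  have hid : T.map (TypeCat.ofHom fun t => t) τ = τ :=
    ConcreteCategory.congr_hom (T.map_id (T.obj A.A)) τ
  have hTe : T.μ.app A.A (T.map (TypeCat.ofHom (T.η.app A.A ∘ A.a)) τ) = T.map A.a τ := by
    rw [← map_ofHom_map_ofHom]
    exact ConcreteCategory.congr_hom (T.right_unit A.A) _
  have hpair : (T.μ.app A.A τ, T.map A.a τ) =
      (T.μ.app A.A (T.map (TypeCat.ofHom fun t => t) τ),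
        T.μ.app A.A (T.map (TypeCat.ofHom (T.η.app A.A ∘ A.a)) τ)) := by
    rw [hid, hTe]
  exact (congrArg (· ∈ R) hpair).mpr h

end CategoryTheory.Monad

/-- The partial evaluation relation `{(μ τ, (Te) τ) : τ ∈ TTA} ⊆ TA × TA` is an
internal relation on the free algebra `(TA, μ)`, and it is the smallest internal
relation relating every formal expression `t` to its total evaluation `η (e t)`. -/
theorem partial_evaluation_relation_internal_smallest
    (T : CategoryTheory.Monad (Type u)) (A : T.Algebra) :
    (∀ ρ : T.obj {x : T.obj A.A × T.obj A.A //
        x ∈ Set.range fun τ : T.obj (T.obj A.A) => (T.μ.app A.A τ, T.map A.a τ)},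
      (T.μ.app A.A (T.map (TypeCat.ofHom (Prod.fst : T.obj A.A × T.obj A.A → T.obj A.A))
          (T.map (TypeCat.ofHom Subtype.val) ρ)),
       T.μ.app A.A (T.map (TypeCat.ofHom (Prod.snd : T.obj A.A × T.obj A.A → T.obj A.A))
          (T.map (TypeCat.ofHom Subtype.val) ρ)))
        ∈ Set.range fun τ : T.obj (T.obj A.A) => (T.μ.app A.A τ, T.map A.a τ))
    ∧
    (∀ t : T.obj A.A,
      (t, T.η.app A.A (A.a t))
        ∈ Set.range fun τ : T.obj (T.obj A.A) => (T.μ.app A.A τ, T.map A.a τ))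
    ∧
    ∀ R : Set (T.obj A.A × T.obj A.A),
      (∀ ρ : T.obj {x : T.obj A.A × T.obj A.A // x ∈ R},
        (T.μ.app A.A (T.map (TypeCat.ofHom (Prod.fst : T.obj A.A × T.obj A.A → T.obj A.A))
            (T.map (TypeCat.ofHom Subtype.val) ρ)),
         T.μ.app A.A (T.map (TypeCat.ofHom (Prod.snd : T.obj A.A × T.obj A.A → T.obj A.A))
            (T.map (TypeCat.ofHom Subtype.val) ρ))) ∈ R) →
      (∀ t : T.obj A.A, (t, T.η.app A.A (A.a t)) ∈ R) →
      (Set.range fun τ : T.obj (T.obj A.A) => (T.μ.app A.A τ, T.map A.a τ)) ⊆ R :=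
  ⟨Monad.isInternalRel_partialEvaluation A, Monad.mk_η_mem_partialEvaluation A,
    fun _ hR hη => Monad.partialEvaluation_subset hR hη⟩
end

section
/- Let (T, η, μ) be a BC monad on the category of sets, i.e. T preserves weak pullbacks and μ is weakly cartesian. Then for every T-algebra (A, e : TA → A), the partial evaluation relation on TA is transitive. More precisely, if τ₀₁ ∈ TTA satisfies μ_A(τ₀₁) = t₀, (Te)(τ₀₁) = t₁ and τ₁₂ ∈ TTA satisfies μ_A(τ₁₂) = t₁, (Te)(τ₁₂) = t₂, then there exists Θ ∈ TTTA with μ_{TA}(Θ) = τ₀₁ and (TTe)(Θ) = τ₁₂, and the element τ₀₂ := (Tμ_A)(Θ) satisfies μ_A(τ₀₂) = t₀ and (Te)(τ₀₂) = t₂. -/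
open CategoryTheory

universe u

namespace CategoryTheory.Monad

variable {T : Monad (Type u)}

lemma assoc_apply {X : Type u} (Θ : T.obj (T.obj (T.obj X))) :
    T.μ.app X (T.map (T.μ.app X) Θ) = T.μ.app X (T.μ.app (T.obj X) Θ) :=
  ConcreteCategory.congr_hom (T.assoc X) Θ

lemma Algebra.map_assoc_apply (A : T.Algebra) (Θ : T.obj (T.obj (T.obj A.A))) :
    T.map A.a (T.map (T.μ.app A.A) Θ) = T.map A.a (T.map (T.map A.a) Θ) := by
  have h : T.map (T.μ.app A.A) ≫ T.map A.a = T.map (T.map A.a) ≫ T.map A.a := by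
    rw [← T.map_comp, ← T.map_comp, A.assoc]
  exact ConcreteCategory.congr_hom h Θ

end CategoryTheory.Monad

theorem partial_evaluations_compose_of_BC_general
    (T : CategoryTheory.Monad (Type u))
    (hμ : ∀ {X Y : Type u} (f : X → Y) (u : T.obj X) (v : T.obj (T.obj Y)),
      T.map (TypeCat.ofHom f) u = T.μ.app Y v →
        ∃ w : T.obj (T.obj X), T.μ.app X w = u ∧ T.map (T.map (TypeCat.ofHom f)) w = v)
    (A : T.Algebra) (t₀ t₁ t₂ : T.obj A.A)
    (τ₀₁ τ₁₂ : T.obj (T.obj A.A))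
    (h₀₁ : T.μ.app A.A τ₀₁ = t₀) (h₁₁ : T.map A.a τ₀₁ = t₁)
    (h₁₂ : T.μ.app A.A τ₁₂ = t₁) (h₂₂ : T.map A.a τ₁₂ = t₂) :
    ∃ Θ : T.obj (T.obj (T.obj A.A)),
      T.μ.app (T.obj A.A) Θ = τ₀₁ ∧
      T.map (T.map A.a) Θ = τ₁₂ ∧
      T.μ.app A.A (T.map (T.μ.app A.A) Θ) = t₀ ∧
      T.map A.a (T.map (T.μ.app A.A) Θ) = t₂ := by
  -- The naturality square of `μ` at `e : TA → A` is a weak pullback, and `(τ₀₁, τ₁₂)` lies over `t₁`.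
  obtain ⟨Θ, hΘμ, hΘe⟩ := hμ A.a τ₀₁ τ₁₂ (h₁₁.trans h₁₂.symm)
  refine ⟨Θ, hΘμ, hΘe, ?_, ?_⟩
  · rw [T.assoc_apply, hΘμ, h₀₁]
  · rw [A.map_assoc_apply, show T.map (T.map A.a) Θ = τ₁₂ from hΘe, h₂₂]

/-- For a BC monad (the functor preserves weak pullbacks and the multiplication is
weakly cartesian), the partial evaluation relation of any algebra is transitive,
with composite witness `(Tμ)(Θ)` for a composition strategy `Θ`. -/
theorem partial_evaluations_compose_of_BC
    (T : CategoryTheory.Monad (Type u))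
    (hT : ∀ {A B C D : Type u} (f : A → B) (g : A → C) (m : B → D) (n : C → D),
      (∀ a, m (f a) = n (g a)) →
      (∀ (b : B) (c : C), m b = n c → ∃ a : A, f a = b ∧ g a = c) →
      ∀ (b : T.obj B) (c : T.obj C), T.map (TypeCat.ofHom m) b = T.map (TypeCat.ofHom n) c →
        ∃ a : T.obj A, T.map (TypeCat.ofHom f) a = b ∧ T.map (TypeCat.ofHom g) a = c)
    (hμ : ∀ {X Y : Type u} (f : X → Y) (u : T.obj X) (v : T.obj (T.obj Y)),
      T.map (TypeCat.ofHom f) u = T.μ.app Y v →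
        ∃ w : T.obj (T.obj X), T.μ.app X w = u ∧ T.map (T.map (TypeCat.ofHom f)) w = v)
    (A : T.Algebra) (t₀ t₁ t₂ : T.obj A.A)
    (τ₀₁ τ₁₂ : T.obj (T.obj A.A))
    (h₀₁ : T.μ.app A.A τ₀₁ = t₀) (h₁₁ : T.map A.a τ₀₁ = t₁)
    (h₁₂ : T.μ.app A.A τ₁₂ = t₁) (h₂₂ : T.map A.a τ₁₂ = t₂) :
    ∃ Θ : T.obj (T.obj (T.obj A.A)),
      T.μ.app (T.obj A.A) Θ = τ₀₁ ∧
      T.map (T.map A.a) Θ = τ₁₂ ∧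
      T.μ.app A.A (T.map (T.μ.app A.A) Θ) = t₀ ∧
      T.map A.a (T.map (T.μ.app A.A) Θ) = t₂ :=
  partial_evaluations_compose_of_BC_general T hμ A t₀ t₁ t₂ τ₀₁ τ₁₂ h₀₁ h₁₁ h₁₂ h₂₂
end

section
/- Let S be the subsemiring of the real numbers generated by √2 (its elements are exactly the reals of the form a + b√2 with a, b natural numbers). Define a relation R on S by: R(s, s') holds if and only if there exists a finitely supported function τ : S →₀ S such that ∑_{t} τ(t)·t = s and ∑_{t} τ(t) = s'. Then R(1, 2) holds and R(2, √2) holds, but R(1, √2) does not hold. In particular, R is not transitive. -/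
open Real Finsupp

lemma sqrt2_mul_self : Real.sqrt 2 * Real.sqrt 2 = 2 :=
  Real.mul_self_sqrt (by norm_num)

lemma mem_repr {x : ℝ} (hx : x ∈ Subsemiring.closure ({Real.sqrt 2} : Set ℝ)) :
    ∃ a b : ℕ, x = a + b * Real.sqrt 2 := by
  induction hx using Subsemiring.closure_induction with
  | mem x hx => exact ⟨0, 1, by simp [Set.mem_singleton_iff.mp hx]⟩
  | zero => exact ⟨0, 0, by simp⟩
  | one => exact ⟨1, 0, by simp⟩
  | add x y hx hy ihx ihy =>
      obtain ⟨a,b,rfl⟩ := ihx; obtain ⟨c,d,rfl⟩ := ihy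
      exact ⟨a+c, b+d, by push_cast; ring⟩
  | mul x y hx hy ihx ihy =>
      obtain ⟨a,b,rfl⟩ := ihx; obtain ⟨c,d,rfl⟩ := ihy
      exact ⟨a*c + 2*(b*d), a*d + b*c, by push_cast; linear_combination ((b:ℝ)*(d:ℝ)) * sqrt2_mul_self⟩

lemma uniq {a b a' b' : ℕ} (h : (a:ℝ) + b * Real.sqrt 2 = a' + b' * Real.sqrt 2) :
    a = a' ∧ b = b' := by
  by_cases hb : b = b'
  · subst hb
    refine ⟨?_, rfl⟩
    exact_mod_cast (by linarith : (a:ℝ) = a')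
  · exfalso
    have hbne : ((b:ℝ) - b') ≠ 0 := sub_ne_zero.mpr (by exact_mod_cast hb)
    have hs : Real.sqrt 2 = ((a':ℝ) - a) / ((b:ℝ) - b') := by
      field_simp; linarith
    refine irrational_sqrt_two ⟨((a':ℤ) - a) / ((b:ℤ) - b'), ?_⟩
    rw [hs]; push_cast; ring

noncomputable def aa (s : Subsemiring.closure ({Real.sqrt 2} : Set ℝ)) : ℕ :=
  (mem_repr s.2).choose

noncomputable def bb (s : Subsemiring.closure ({Real.sqrt 2} : Set ℝ)) : ℕ :=
  (mem_repr s.2).choose_spec.choose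

lemma repr_spec (s : Subsemiring.closure ({Real.sqrt 2} : Set ℝ)) :
    (s : ℝ) = aa s + bb s * Real.sqrt 2 :=
  (mem_repr s.2).choose_spec.choose_spec

/-- In the subsemiring `S` of `ℝ` generated by `√2`, the partial evaluation relation
`R` of the free `S`-semimodule monad on the terminal algebra (where `R s s'` holds iff
some finitely supported `τ : S →₀ S` has `∑ τ(t)·t = s` and `∑ τ(t) = s'`) satisfies
`R 1 2` and `R 2 √2` but not `R 1 √2`; in particular `R` is not transitive. -/
theorem partial_evaluation_not_transitive_sqrt2 :
    let S := Subsemiring.closure ({Real.sqrt 2} : Set ℝ)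
    let r2 : S := ⟨Real.sqrt 2, Subsemiring.subset_closure (Set.mem_singleton _)⟩
    let R : S → S → Prop := fun s s' =>
      ∃ τ : S →₀ S, (τ.sum fun t c => c * t) = s ∧ (τ.sum fun _ c => c) = s'
    R 1 2 ∧ R 2 r2 ∧ ¬ R 1 r2 ∧ ¬ Transitive R := by
  intro S r2 R
  have h01 : (0 : S) ≠ 1 := by
    intro h
    have : ((0:S):ℝ) = ((1:S):ℝ) := congrArg _ h
    simp at this
  have h12 : R 1 2 := by
    refine ⟨Finsupp.single 0 1 + Finsupp.single 1 1, ?_, ?_⟩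
    · rw [Finsupp.sum_add_index' (by intro a; simp) (by intro a b c; exact add_mul b c a)]
      rw [Finsupp.sum_single_index (by simp), Finsupp.sum_single_index (by simp)]
      simp
    · rw [Finsupp.sum_add_index' (fun a => rfl) (fun a b c => rfl)]
      rw [Finsupp.sum_single_index rfl, Finsupp.sum_single_index rfl]
      norm_num
  have h2r : R 2 r2 := by
    refine ⟨Finsupp.single r2 r2, ?_, ?_⟩
    · rw [Finsupp.sum_single_index (by simp)]
      ext
      push_cast
      exact sqrt2_mul_self
    · rw [Finsupp.sum_single_index rfl]
  have h1r : ¬ R 1 r2 := by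
    rintro ⟨τ, ht1, ht2⟩
    -- cast to ℝ
    have ht1' : ∑ t ∈ τ.support, ((τ t : ℝ) * (t : ℝ)) = 1 := by
      have := congrArg (fun x : S => (x : ℝ)) ht1
      simpa [Finsupp.sum] using this
    have ht2' : ∑ t ∈ τ.support, ((τ t : ℝ)) = Real.sqrt 2 := by
      have := congrArg (fun x : S => (x : ℝ)) ht2
      simpa [Finsupp.sum] using this
    -- decompose the second sum
    have e2 : ((∑ t ∈ τ.support, aa (τ t) : ℕ) : ℝ)
        + ((∑ t ∈ τ.support, bb (τ t) : ℕ) : ℝ) * Real.sqrt 2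
        = ((0 : ℕ) : ℝ) + ((1 : ℕ) : ℝ) * Real.sqrt 2 := by
      push_cast
      rw [Finset.sum_mul, ← Finset.sum_add_distrib]
      rw [Finset.sum_congr rfl (fun t _ => (repr_spec (τ t)).symm)]
      rw [ht2']; ring
    obtain ⟨ha0, -⟩ := uniq e2
    have ha0' : ∀ t ∈ τ.support, aa (τ t) = 0 := by
      intro t ht
      exact (Finset.sum_eq_zero_iff.mp ha0) t ht
    -- decompose the first sum
    have e1 : ((∑ t ∈ τ.support, 2 * (bb (τ t) * bb t) : ℕ) : ℝ)
        + ((∑ t ∈ τ.support, bb (τ t) * aa t : ℕ) : ℝ) * Real.sqrt 2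
        = ((1 : ℕ) : ℝ) + ((0 : ℕ) : ℝ) * Real.sqrt 2 := by
      push_cast
      rw [Finset.sum_mul, ← Finset.sum_add_distrib]
      rw [Finset.sum_congr rfl (fun t ht => ?_), ht1']
      · ring
      · have h1 : ((τ t : S) : ℝ) = (bb (τ t) : ℝ) * Real.sqrt 2 := by
          rw [repr_spec (τ t), ha0' t ht]; push_cast; ring
        have h2 : ((t : S) : ℝ) = (aa t : ℝ) + (bb t : ℝ) * Real.sqrt 2 := repr_spec t
        rw [h1, h2]
        linear_combination (-((bb (τ t) : ℝ) * (bb t : ℝ))) * sqrt2_mul_self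
    obtain ⟨hc, -⟩ := uniq e1
    have : (2 : ℕ) ∣ 1 := hc ▸ Finset.dvd_sum (fun t _ => Dvd.intro _ rfl)
    omega
  refine ⟨h12, h2r, h1r, ?_⟩
  intro htr
  exact h1r (htr h12 h2r)
end

section
/- Let (T, η, μ) be a monad on the category of sets and (A, e : TA → A) a T-algebra. Then (A, e) is indiscrete if and only if the partial evaluation relation on TA is an equivalence relation. Moreover, in this case the partial evaluation relation equals the kernel pair of e, i.e. t₁ is a partial evaluation of t₀ if and only if e(t₀) = e(t₁). -/
/-!
Partial evaluation is always reflexive (witnessed by `T η_A t`), it preserves `e` (the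
associativity law of the algebra), and it relates every `t` to the unit `η_A (e t)`
(witnessed by `η_{TA} t`). Hence if it is an equivalence, any `t₀, t₁` with
`e t₀ = e t₁` are linked through `η_A (e t₀) = η_A (e t₁)`; conversely, for an indiscrete
algebra it coincides with the kernel pair of `e`, which is an equivalence.
-/

open CategoryTheory

universe u

namespace CategoryTheory.Monad.Algebra

variable {T : Monad (Type u)} (A : T.Algebra)

def PartialEval (t₀ t₁ : T.obj A.A) : Prop :=
  ∃ τ : T.obj (T.obj A.A), T.μ.app A.A τ = t₀ ∧ T.map A.a τ = t₁

def IsIndiscrete : Prop :=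
  ∀ t₀ t₁ : T.obj A.A, A.a t₀ = A.a t₁ → A.PartialEval t₀ t₁

variable {A}

theorem PartialEval.a_eq {t₀ t₁ : T.obj A.A} (h : A.PartialEval t₀ t₁) : A.a t₀ = A.a t₁ := by
  obtain ⟨τ, rfl, rfl⟩ := h
  simpa using types_congr_hom A.assoc τ

theorem partialEval_refl (t : T.obj A.A) : A.PartialEval t t := by
  refine ⟨T.map (T.η.app A.A) t, types_congr_hom (T.right_unit A.A) t, ?_⟩
  have hid : T.map (T.η.app A.A) ≫ T.map A.a = 𝟙 _ := by
    rw [← T.map_comp, A.unit]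
    exact T.map_id _
  exact types_congr_hom hid t

theorem partialEval_unit_a (t : T.obj A.A) : A.PartialEval t (T.η.app A.A (A.a t)) :=
  ⟨T.η.app (T.obj A.A) t, types_congr_hom (T.left_unit A.A) t,
    (types_congr_hom (T.η.naturality A.a) t).symm⟩

theorem partialEval_iff_of_isIndiscrete (hA : A.IsIndiscrete) (t₀ t₁ : T.obj A.A) :
    A.PartialEval t₀ t₁ ↔ A.a t₀ = A.a t₁ :=
  ⟨PartialEval.a_eq, hA t₀ t₁⟩

theorem isIndiscrete_iff_equivalence_partialEval :
    A.IsIndiscrete ↔ _root_.Equivalence A.PartialEval := by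
  constructor
  · intro hA
    exact ⟨partialEval_refl, fun h ↦ hA _ _ h.a_eq.symm,
      fun h h' ↦ hA _ _ (h.a_eq.trans h'.a_eq)⟩
  · intro hEquiv t₀ t₁ he
    have h₁ := hEquiv.symm (partialEval_unit_a t₁)
    rw [← he] at h₁
    exact hEquiv.trans (partialEval_unit_a t₀) h₁

end CategoryTheory.Monad.Algebra

/-- A `T`-algebra `(A, e)` is indiscrete if and only if the partial evaluation
relation on `TA` is an equivalence relation; in that case the partial evaluation
relation is the kernel pair of `e`. -/
theorem indiscrete_iff_partial_evaluation_equivalence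
    (T : CategoryTheory.Monad (Type u)) (A : T.Algebra) :
    ((∀ t₀ t₁ : T.obj A.A, A.a t₀ = A.a t₁ →
        ∃ τ : T.obj (T.obj A.A), T.μ.app A.A τ = t₀ ∧ T.map A.a τ = t₁)
      ↔
      Equivalence (fun t₀ t₁ : T.obj A.A =>
        ∃ τ : T.obj (T.obj A.A), T.μ.app A.A τ = t₀ ∧ T.map A.a τ = t₁))
    ∧
    ((∀ t₀ t₁ : T.obj A.A, A.a t₀ = A.a t₁ →
        ∃ τ : T.obj (T.obj A.A), T.μ.app A.A τ = t₀ ∧ T.map A.a τ = t₁) →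
      ∀ t₀ t₁ : T.obj A.A,
        (∃ τ : T.obj (T.obj A.A), T.μ.app A.A τ = t₀ ∧ T.map A.a τ = t₁)
          ↔ A.a t₀ = A.a t₁) :=
  ⟨Monad.Algebra.isIndiscrete_iff_equivalence_partialEval,
    Monad.Algebra.partialEval_iff_of_isIndiscrete⟩
end

section
/- Let A be a group, let e : FreeGroup A → A be the canonical evaluation homomorphism (the lift of the identity of A), and let μ : FreeGroup (FreeGroup A) → FreeGroup A be the multiplication of the free group monad (the lift of the identity of FreeGroup A). Then for all t₀, t₁ ∈ FreeGroup A with e(t₀) = e(t₁), there exists τ ∈ FreeGroup (FreeGroup A) with μ(τ) = t₀ and (FreeGroup.map e)(τ) = t₁. In other words, every group is an indiscrete algebra of the free group monad: the algebra square is a weak pullback. -/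
universe u

lemma aux_lift_map_of {A : Type u} [Group A] (x : FreeGroup A) :
    FreeGroup.lift (id : FreeGroup A → FreeGroup A) (FreeGroup.map FreeGroup.of x) = x := by
  have : (FreeGroup.lift (id : FreeGroup A → FreeGroup A)).comp
      (FreeGroup.map (FreeGroup.of : A → FreeGroup A)) = MonoidHom.id _ := by
    apply FreeGroup.ext_hom
    intro a
    simp
  exact congrArg (fun f => f x) (congrArg DFunLike.coe this)

lemma aux_map_lift {A : Type u} [Group A] (x : FreeGroup A) :
    FreeGroup.map (⇑(FreeGroup.lift (id : A → A))) (FreeGroup.map FreeGroup.of x) = x := by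
  have : (FreeGroup.map (⇑(FreeGroup.lift (id : A → A)))).comp
      (FreeGroup.map (FreeGroup.of : A → FreeGroup A)) = MonoidHom.id _ := by
    apply FreeGroup.ext_hom
    intro a
    simp
  exact congrArg (fun f => f x) (congrArg DFunLike.coe this)

/-- Every group is an indiscrete algebra of the free group monad: if two elements of
`FreeGroup A` have the same evaluation in the group `A`, then some element of
`FreeGroup (FreeGroup A)` lifts both along the monad multiplication and `FreeGroup.map e`. -/
theorem group_indiscrete_free_group_monad
    (A : Type u) [Group A] (t₀ t₁ : FreeGroup A)
    (h : FreeGroup.lift (id : A → A) t₀ = FreeGroup.lift (id : A → A) t₁) :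
    ∃ τ : FreeGroup (FreeGroup A),
      FreeGroup.lift (id : FreeGroup A → FreeGroup A) τ = t₀ ∧
      FreeGroup.map (⇑(FreeGroup.lift (id : A → A))) τ = t₁ := by
  refine ⟨FreeGroup.of t₀ * (FreeGroup.of t₁)⁻¹ * FreeGroup.map FreeGroup.of t₁, ?_, ?_⟩
  · simp [aux_lift_map_of]
  · simp [aux_map_lift, h]
end

section
/- Consider the multisets α := {{2,2},{3,3},{3,1}} and β := {{4,6},{4}} of multisets of natural numbers, and the three-fold multisets δ := {{{2,2},{3,3}},{{3,1}}} and δ' := {{{2,2}},{{3,3},{3,1}}}. Then: Multiset.map Multiset.sum α = Multiset.join β (both equal {4,6,4}); Multiset.join δ = Multiset.join δ' = α; Multiset.map (Multiset.map Multiset.sum) δ = Multiset.map (Multiset.map Multiset.sum) δ' = β; but Multiset.map Multiset.join δ ≠ Multiset.map Multiset.join δ'. Hence in the bar construction of the commutative monoid (ℕ, +) for the commutative monoid (multiset) monad, there is an inner 2-horn with two different fillers whose remaining outer 1-faces are different. -/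
/-- In the bar construction of the commutative monoid `(ℕ, +)` for the multiset monad,
the inner 2-horn `(α, β)` has two different fillers `δ, δ'` whose remaining outer
1-faces `Multiset.map Multiset.join δ` and `Multiset.map Multiset.join δ'` differ. -/
theorem bar_construction_nonunique_fillers :
    let α : Multiset (Multiset ℕ) := {{2, 2}, {3, 3}, {3, 1}}
    let β : Multiset (Multiset ℕ) := {{4, 6}, {4}}
    let δ : Multiset (Multiset (Multiset ℕ)) := {{{2, 2}, {3, 3}}, {{3, 1}}}
    let δ' : Multiset (Multiset (Multiset ℕ)) := {{{2, 2}}, {{3, 3}, {3, 1}}}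
    Multiset.map Multiset.sum α = ({4, 6, 4} : Multiset ℕ) ∧
    Multiset.join β = ({4, 6, 4} : Multiset ℕ) ∧
    Multiset.join δ = α ∧
    Multiset.join δ' = α ∧
    Multiset.map (Multiset.map Multiset.sum) δ = β ∧
    Multiset.map (Multiset.map Multiset.sum) δ' = β ∧
    Multiset.map Multiset.join δ ≠ Multiset.map Multiset.join δ' := by
  refine ⟨by decide, by decide, by decide, by decide, by decide, by decide, by decide⟩
end

section
/- There is no γ : Multiset (Multiset (Multiset ℕ)) satisfying both Multiset.join γ = {{2,2,2,2},{3,1}} and Multiset.map Multiset.join γ = {{2,2},{2,2,3,1}}. Consequently, the bar construction of the commutative monoid (ℕ, +) for the commutative monoid (multiset) monad contains an inner 3-horn which admits no filler, so the bar construction is not a quasicategory. -/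
/-- There is no 2-simplex `γ` in the bar construction of `(ℕ, +)` for the multiset
monad with `d₂(γ) = Multiset.join γ = {{2,2,2,2},{3,1}}` and
`d₁(γ) = Multiset.map Multiset.join γ = {{2,2},{2,2,3,1}}`; hence an explicit inner
3-horn of the bar construction admits no filler. -/
theorem bar_construction_unfillable_inner_horn :
    ¬ ∃ γ : Multiset (Multiset (Multiset ℕ)),
        Multiset.join γ = ({{2, 2, 2, 2}, {3, 1}} : Multiset (Multiset ℕ)) ∧
        Multiset.map Multiset.join γ
          = ({{2, 2}, {2, 2, 3, 1}} : Multiset (Multiset ℕ)) := by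
  rintro ⟨γ, h1, h2⟩
  have hc : Multiset.card γ = 2 := by
    have := congrArg Multiset.card h2
    simpa using this
  obtain ⟨a, b, rfl⟩ := Multiset.card_eq_two.mp hc
  simp [Multiset.join] at h1 h2
  have hle : a ≤ ({{2, 2, 2, 2}, {3, 1}} : Multiset (Multiset ℕ)) := by
    exact le_of_le_of_eq (Multiset.le_add_right a b) h1
  have ha : a ∈ Multiset.powerset ({{2, 2, 2, 2}, {3, 1}} : Multiset (Multiset ℕ)) :=
    Multiset.mem_powerset.2 hle
  have hja : a.sum ∈ ({{2, 2}, {2, 2, 3, 1}} : Multiset (Multiset ℕ)) := by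
    have : a.sum ∈ a.sum ::ₘ {b.sum} := Multiset.mem_cons_self _ _
    rwa [h2] at this
  fin_cases ha <;> revert hja <;> decide
end

section
/- Let τ : Multiset (Multiset ℕ), and set t₀ := Multiset.join τ and t₁ := Multiset.map Multiset.sum τ. If 0 is not an element of t₁, then Multiset.card t₁ ≤ Multiset.card t₀, and if moreover Multiset.card t₁ = Multiset.card t₀ then t₀ = t₁. In particular, for formal sums of positive natural numbers, any nontrivial partial evaluation in the commutative monoid monad strictly decreases the number of terms. -/
/-- For the multiset monad, a partial evaluation `τ` from `t₀ = Multiset.join τ` to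
`t₁ = Multiset.map Multiset.sum τ` of a formal sum of positive natural numbers never
increases the number of terms, and preserves it only if it is trivial. -/
theorem partial_evaluation_card_decreases
    (τ : Multiset (Multiset ℕ))
    (h : (0 : ℕ) ∉ Multiset.map Multiset.sum τ) :
    Multiset.card (Multiset.map Multiset.sum τ) ≤ Multiset.card (Multiset.join τ) ∧
    (Multiset.card (Multiset.map Multiset.sum τ) = Multiset.card (Multiset.join τ) →
      Multiset.join τ = Multiset.map Multiset.sum τ) := by
  induction τ using Multiset.induction with
  | empty => simp
  | cons s τ' ih =>
    simp only [Multiset.map_cons, Multiset.mem_cons, not_or] at h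
    obtain ⟨hs, h'⟩ := h
    obtain ⟨ih1, ih2⟩ := ih h'
    have hs0 : s ≠ 0 := by rintro rfl; exact hs rfl
    have hcs : 1 ≤ Multiset.card s := Multiset.card_pos.mpr hs0
    simp only [Multiset.join_cons, Multiset.map_cons, Multiset.card_cons, Multiset.card_add]
    constructor
    · omega
    · intro heq
      have hcs1 : Multiset.card s = 1 := by omega
      have hcm : Multiset.card (Multiset.map Multiset.sum τ') = Multiset.card (Multiset.join τ') := by omega
      obtain ⟨a, rfl⟩ := Multiset.card_eq_one.mp hcs1
      simp [ih2 hcm]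
end

section
/- Let (T, η, μ) be a monad on the category of sets such that T preserves weak pullbacks and μ is weakly cartesian (a BC monad). Then for every function f : X → Y between sets and every natural number k, the k-fold T-image of the naturality square of μ at f is a weak pullback: for all u ∈ T^{k+1}X and v ∈ T^{k+2}Y with (T^{k+1}f)(u) = (T^{k}μ_Y)(v), there exists w ∈ T^{k+2}X with (T^{k}μ_X)(w) = u and (T^{k+2}f)(w) = v. Consequently, for every T-algebra (A, e), all the squares of face maps d_i, d_j with 0 ≤ i < j − 1 in the bar construction of A are weak pullbacks; i.e., the bar construction of any algebra of a BC monad is inner span complete. -/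
open CategoryTheory

universe u

/-- Iterated application of (the functor part of) a monad on `Set`. -/
def Tpow (T : CategoryTheory.Monad (Type u)) : ℕ → Type u → Type u
  | 0, X => X
  | k + 1, X => T.obj (Tpow T k X)

/-- Iterated application of the monad functor to a function. -/
def TpowMap (T : CategoryTheory.Monad (Type u)) :
    (k : ℕ) → {X Y : Type u} → (X → Y) → Tpow T k X → Tpow T k Y
  | 0, _, _, f => f
  | k + 1, _, _, f => T.map (TypeCat.ofHom (TpowMap T k f))

/-!
`T^k` preserves weak pullbacks of commuting squares, by induction on `k`: `T` does, and `T^k`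
preserves commutativity by functoriality. The squares in question are the images under `T^k` of
the naturality squares of `μ`, which commute and are weak pullbacks because `μ` is weakly
cartesian.
-/

-- Only the lifting property: commutativity of the square is always a separate hypothesis.
def IsWeakPullback {A B C D : Type*} (f : A → B) (g : A → C) (m : B → D) (n : C → D) : Prop :=
  ∀ b c, m b = n c → ∃ a, f a = b ∧ g a = c

def CategoryTheory.Functor.PreservesWeakPullbacks (F : Type u ⥤ Type*) : Prop :=
  ∀ {A B C D : Type u} (f : A → B) (g : A → C) (m : B → D) (n : C → D),
    (∀ a, m (f a) = n (g a)) → IsWeakPullback f g m n →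
      IsWeakPullback (F.map (TypeCat.ofHom f)) (F.map (TypeCat.ofHom g))
        (F.map (TypeCat.ofHom m)) (F.map (TypeCat.ofHom n))

namespace TpowMap

variable (T : Monad (Type u))

lemma comp (k : ℕ) {X Y Z : Type u} (f : X → Y) (g : Y → Z) :
    TpowMap T k g ∘ TpowMap T k f = TpowMap T k (g ∘ f) := by
  induction k generalizing X Y Z with
  | zero => rfl
  | succ k ih =>
    change ⇑(T.map (TypeCat.ofHom (TpowMap T k f)) ≫ T.map (TypeCat.ofHom (TpowMap T k g))) =
      ⇑(T.map (TypeCat.ofHom (TpowMap T k (g ∘ f))))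
    rw [← Functor.map_comp, ← ih]
    rfl

lemma isWeakPullback (hT : T.PreservesWeakPullbacks) {A B C D : Type u}
    {f : A → B} {g : A → C} {m : B → D} {n : C → D} (hcomm : ∀ a, m (f a) = n (g a))
    (h : IsWeakPullback f g m n) (k : ℕ) :
    IsWeakPullback (TpowMap T k f) (TpowMap T k g) (TpowMap T k m) (TpowMap T k n) := by
  induction k with
  | zero => exact h
  | succ k ih =>
    refine hT _ _ _ _ (congrFun (?_ : TpowMap T k m ∘ TpowMap T k f = _ ∘ _)) ih
    rw [comp, comp]
    exact congrArg (TpowMap T k) (funext hcomm)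

end TpowMap

/-- For a BC monad on `Set` (the functor preserves weak pullbacks and `μ` is weakly
cartesian), every `k`-fold `T`-image of a naturality square of `μ` is a weak pullback.
These are exactly the squares of face maps `d_i, d_j` with `i < j - 1` in the bar
construction of any algebra, so the bar construction is inner span complete. -/
theorem BC_monad_bar_construction_inner_span_complete
    (T : CategoryTheory.Monad (Type u))
    (hT : ∀ {A B C D : Type u} (f : A → B) (g : A → C) (m : B → D) (n : C → D),
      (∀ a, m (f a) = n (g a)) →
      (∀ (b : B) (c : C), m b = n c → ∃ a : A, f a = b ∧ g a = c) →
      ∀ (b : T.obj B) (c : T.obj C), T.map (TypeCat.ofHom m) b = T.map (TypeCat.ofHom n) c →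
        ∃ a : T.obj A, T.map (TypeCat.ofHom f) a = b ∧ T.map (TypeCat.ofHom g) a = c)
    (hμ : ∀ {X Y : Type u} (f : X → Y) (u : T.obj X) (v : T.obj (T.obj Y)),
      T.map (TypeCat.ofHom f) u = T.μ.app Y v →
        ∃ w : T.obj (T.obj X), T.μ.app X w = u ∧ T.map (T.map (TypeCat.ofHom f)) w = v) :
    ∀ (k : ℕ) (X Y : Type u) (f : X → Y)
      (u : Tpow T k (T.obj X)) (v : Tpow T k (T.obj (T.obj Y))),
      TpowMap T k (T.map (TypeCat.ofHom f)) u = TpowMap T k (T.μ.app Y) v →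
      ∃ w : Tpow T k (T.obj (T.obj X)),
        TpowMap T k (T.μ.app X) w = u ∧ TpowMap T k (T.map (T.map (TypeCat.ofHom f))) w = v := by
  intro k X Y f
  have μ_naturality (w : T.obj (T.obj X)) :
      T.map (TypeCat.ofHom f) (T.μ.app X w) = T.μ.app Y (T.map (T.map (TypeCat.ofHom f)) w) :=
    (T.μ.naturality_apply (TypeCat.ofHom f) w).symm
  exact TpowMap.isWeakPullback T @hT μ_naturality (hμ f) k
end
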